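/- arXiv:1902.09906 — 2 statements merged into one kernel-verified Lean document; each statement's English description precedes it below -/
import Mathlib

section
/- For a real symmetric matrix Ψ and a symmetric matrix R, the Fréchet derivative of the matrix exponential satisfies: d/dε exp(-Ψ + ε R)|_{ε=0} = Σ_{i,j} e^{-λ_i/2} e^{-λ_j/2} · h(λ_i - λ_j) · P_i R P_j, where h(x)=sinh(x/2)/(x/2) (h(0)=1), λ_i are the eigenvalues and P_i the spectral projectors of Ψ. -/
/-!
Differentiating the exponential series termwise (the derivative series is dominated on a ball),
the derivative of `ε ↦ exp (A + ε • B)` at `0` is `∑ₖ (1/k!) ∑_{i<k} A^(k-1-i) B A^i`.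
For `A = ∑ μ_p P_p` with complete orthogonal idempotents `P_p` this is
`∑_{p,q} c(μ_p, μ_q) P_p B P_q`, where `c(x, y) = ∑ₖ (1/k!) ∑_{i<k} x^(k-1-i) y^i` is the
divided difference `dslope exp x y` of `exp`. For `x = -a`, `y = -b`, factoring out
`e^{-(a+b)/2}` turns it into `e^{-a/2} e^{-b/2} sinh((a-b)/2) / ((a-b)/2)`.
-/

open Finset Matrix
open scoped Nat

attribute [local instance] Matrix.frobeniusNormedRing Matrix.frobeniusNormedAlgebra

section BanachAlgebra

variable {𝕂 𝔸 : Type*} [RCLike 𝕂] [NormedRing 𝔸] [NormedAlgebra 𝕂 𝔸]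

theorem norm_pow_mul_le (A B : 𝔸) (k : ℕ) : ‖A ^ k * B‖ ≤ ‖A‖ ^ k * ‖B‖ := by
  induction k with
  | zero => simp
  | succ k ih =>
    calc ‖A ^ (k + 1) * B‖ = ‖A * (A ^ k * B)‖ := by rw [pow_succ', mul_assoc]
      _ ≤ ‖A‖ * (‖A‖ ^ k * ‖B‖) := (norm_mul_le _ _).trans (by gcongr)
      _ = ‖A‖ ^ (k + 1) * ‖B‖ := by ring

theorem norm_mul_pow_le (A B : 𝔸) (k : ℕ) : ‖B * A ^ k‖ ≤ ‖B‖ * ‖A‖ ^ k := by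
  induction k with
  | zero => simp
  | succ k ih =>
    calc ‖B * A ^ (k + 1)‖ = ‖B * A ^ k * A‖ := by rw [pow_succ, mul_assoc]
      _ ≤ ‖B‖ * ‖A‖ ^ k * ‖A‖ := (norm_mul_le _ _).trans (by gcongr)
      _ = ‖B‖ * ‖A‖ ^ (k + 1) := by ring

theorem norm_sum_pow_mul_mul_pow_le (A B : 𝔸) (k : ℕ) :
    ‖∑ i ∈ range k, A ^ (k.pred - i) * B * A ^ i‖ ≤ k * (‖A‖ ^ k.pred * ‖B‖) := by
  have hterm : ∀ i ∈ range k, ‖A ^ (k.pred - i) * B * A ^ i‖ ≤ ‖A‖ ^ k.pred * ‖B‖ := by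
    intro i hi
    have hik : i ≤ k.pred := Nat.le_pred_of_lt (mem_range.mp hi)
    calc ‖A ^ (k.pred - i) * B * A ^ i‖ ≤ ‖A‖ ^ (k.pred - i) * ‖B‖ * ‖A‖ ^ i :=
          (norm_mul_pow_le _ _ _).trans (by gcongr; exact norm_pow_mul_le _ _ _)
      _ = ‖A‖ ^ k.pred * ‖B‖ := by
          rw [mul_right_comm, ← pow_add, Nat.sub_add_cancel hik]
  simpa using (norm_sum_le _ _).trans (sum_le_sum hterm)

variable [CompleteSpace 𝔸]

theorem hasDerivAt_exp_add_smul (A B : 𝔸) :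
    HasDerivAt (fun t : 𝕂 => NormedSpace.exp (A + t • B))
      (∑' k : ℕ, (k !⁻¹ : 𝕂) • ∑ i ∈ range k, A ^ (k.pred - i) * B * A ^ i) 0 := by
  set C := ‖A‖ + ‖B‖
  have hC : ∀ t ∈ Metric.ball (0 : 𝕂) 1, ‖A + t • B‖ ≤ C := fun t ht =>
    calc ‖A + t • B‖ ≤ ‖A‖ + ‖t‖ * ‖B‖ := (norm_add_le _ _).trans_eq (by rw [norm_smul])
      _ ≤ ‖A‖ + 1 * ‖B‖ := by gcongr; exact (mem_ball_zero_iff.mp ht).le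
      _ = C := by rw [one_mul]
  have hsummable : Summable fun k : ℕ => (k ! : ℝ)⁻¹ * (k * (C ^ k.pred * ‖B‖)) := by
    rw [← summable_nat_add_iff 1]
    refine ((Real.summable_pow_div_factorial C).mul_right ‖B‖).congr fun k => ?_
    rw [Nat.factorial_succ, Nat.pred_succ]
    push_cast
    field_simp
  have hderiv := hasDerivAt_tsum_of_isPreconnected hsummable Metric.isOpen_ball
    (convex_ball (0 : 𝕂) 1).isPreconnected
    (g := fun (k : ℕ) (t : 𝕂) => (k !⁻¹ : 𝕂) • (A + t • B) ^ k)
    (g' := fun (k : ℕ) (t : 𝕂) =>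
      (k !⁻¹ : 𝕂) • ∑ i ∈ range k, (A + t • B) ^ (k.pred - i) * B * (A + t • B) ^ i)
    (fun k t _ => by
      simpa using ((((hasDerivAt_id' t).smul_const B).const_add A).fun_pow' k).fun_const_smul
        (k !⁻¹ : 𝕂))
    (fun k t ht => by
      rw [norm_smul, norm_inv, RCLike.norm_natCast]
      gcongr
      exact (norm_sum_pow_mul_mul_pow_le _ B k).trans (by gcongr; exact hC t ht))
    (Metric.mem_ball_self one_pos) (NormedSpace.expSeries_summable' _)
    (Metric.mem_ball_self one_pos)
  simpa [NormedSpace.exp_eq_tsum 𝕂] using hderiv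

end BanachAlgebra

section CompleteOrthogonalIdempotents

variable {𝕜 𝔸 ι : Type*} [CommSemiring 𝕜] [Semiring 𝔸] [Algebra 𝕜 𝔸] [Fintype ι]
  {P : ι → 𝔸}

theorem CompleteOrthogonalIdempotents.sum_smul_pow (hP : CompleteOrthogonalIdempotents P)
    (μ : ι → 𝕜) (k : ℕ) : (∑ i, μ i • P i) ^ k = ∑ i, μ i ^ k • P i := by
  classical
  induction k with
  | zero => simp [hP.complete]
  | succ k ih =>
    simp only [pow_succ, ih, sum_mul, mul_sum, smul_mul_smul_comm, hP.mul_eq, smul_ite,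
      smul_zero, sum_ite_eq', mem_univ, if_true]

theorem CompleteOrthogonalIdempotents.sum_range_pow_mul_mul_pow
    (hP : CompleteOrthogonalIdempotents P) (μ : ι → 𝕜) (B : 𝔸) (k : ℕ) :
    ∑ i ∈ range k, (∑ p, μ p • P p) ^ (k.pred - i) * B * (∑ p, μ p • P p) ^ i =
      ∑ p, ∑ q, (∑ i ∈ range k, μ p ^ (k.pred - i) * μ q ^ i) • (P p * B * P q) := by
  simp only [hP.sum_smul_pow, sum_mul, mul_sum, smul_mul_assoc, mul_smul_comm, smul_smul,
    sum_smul, smul_sum]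
  rw [sum_comm]
  refine (sum_congr rfl fun q _ => sum_comm).trans ?_
  rw [sum_comm]
  exact sum_congr rfl fun p _ => sum_congr rfl fun q _ => sum_congr rfl fun i _ => by
    rw [mul_comm]

end CompleteOrthogonalIdempotents

theorem completeOrthogonalIdempotents_vecMulVec {R ι : Type*} [CommRing R] [Fintype ι]
    [DecidableEq ι] {e : ι → ι → R} (he : ∀ i j, e i ⬝ᵥ e j = if i = j then 1 else 0) :
    CompleteOrthogonalIdempotents fun i => vecMulVec (e i) (e i) := by
  have hrows : of e * (of e)ᵀ = 1 := by
    ext i j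
    simp [mul_apply, one_apply, ← he i j, dotProduct]
  refine CompleteOrthogonalIdempotents.iff_ortho_complete.mpr ⟨fun i j hij => ?_, ?_⟩
  · simp [vecMulVec_mul_vecMulVec, he, hij]
  · ext a b
    have hcols : (of e)ᵀ * of e = 1 := mul_eq_one_comm.mp hrows
    simpa [mul_apply, vecMulVec_apply, Matrix.sum_apply] using Matrix.ext_iff.mpr hcols a b

theorem Real.hasSum_pow_div_factorial (x : ℝ) : HasSum (fun k => x ^ k / k !) (Real.exp x) := by
  rw [Real.exp_eq_exp_ℝ]
  exact NormedSpace.expSeries_div_hasSum_exp x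

theorem Real.hasSum_dslope_exp (x y : ℝ) :
    HasSum (fun k => (k ! : ℝ)⁻¹ * ∑ i ∈ range k, x ^ (k.pred - i) * y ^ i)
      (dslope Real.exp x y) := by
  rcases eq_or_ne y x with rfl | hxy
  · rw [dslope_same, Real.deriv_exp, ← hasSum_nat_add_iff' 1, sum_range_one, Nat.factorial_zero,
      range_zero, sum_empty, mul_zero, sub_zero]
    refine (Real.hasSum_pow_div_factorial y).congr_fun fun k => ?_
    rw [Nat.pred_succ, sum_congr rfl fun i hi => pow_sub_mul_pow y (mem_range_succ_iff.mp hi),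
      sum_const, card_range, nsmul_eq_mul, Nat.factorial_succ]
    push_cast
    field_simp
  · rw [dslope_of_ne _ hxy, slope_def_field]
    refine (((Real.hasSum_pow_div_factorial y).sub (Real.hasSum_pow_div_factorial x)).div_const
      (y - x)).congr_fun fun k => ?_
    rw [eq_div_iff (sub_ne_zero.mpr hxy), ← sub_div, ← geom_sum₂_mul, Nat.pred_eq_sub_one]
    simp only [mul_comm (x ^ _)]
    ring

theorem Real.dslope_exp_neg_neg (a b : ℝ) :
    dslope Real.exp (-a) (-b) = Real.exp (-a / 2) * Real.exp (-b / 2) *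
      (if a - b = 0 then 1 else Real.sinh ((a - b) / 2) / ((a - b) / 2)) := by
  rcases eq_or_ne (a - b) 0 with hab | hab
  · obtain rfl := sub_eq_zero.mp hab
    rw [dslope_same, Real.deriv_exp, if_pos (sub_self a), mul_one, ← Real.exp_add]
    ring_nf
  · rw [if_neg hab, dslope_of_ne _ (by contrapose! hab; linarith), slope_def_field,
      Real.sinh_eq]
    have hnum : Real.exp (-a / 2) * Real.exp (-b / 2) *
        (Real.exp ((a - b) / 2) - Real.exp (-((a - b) / 2))) = Real.exp (-b) - Real.exp (-a) := by
      simp only [mul_sub, ← Real.exp_add]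
      ring_nf
    rw [← hnum, show -b - -a = a - b by ring]
    field_simp

theorem hasDerivAt_exp_neg_psi_general {n : ℕ} (Ψ R : Matrix (Fin n) (Fin n) ℝ)
    (e : Fin n → (Fin n → ℝ)) (lam : Fin n → ℝ)
    (hON : ∀ i j, e i ⬝ᵥ e j = if i = j then 1 else 0)
    (P : Fin n → Matrix (Fin n) (Fin n) ℝ)
    (hP : ∀ i, P i = vecMulVec (e i) (e i))
    (hspec : Ψ = ∑ i, lam i • P i)
    (h : ℝ → ℝ)
    (hh : ∀ x : ℝ, h x = if x = 0 then 1 else Real.sinh (x / 2) / (x / 2)) :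
    HasDerivAt (fun ε : ℝ => NormedSpace.exp (-Ψ + ε • R))
      (∑ i, ∑ j,
        (Real.exp (-lam i / 2) * Real.exp (-lam j / 2) * h (lam i - lam j)) •
          (P i * R * P j)) 0 := by
  have hPidem : CompleteOrthogonalIdempotents P := by
    simpa only [← hP] using completeOrthogonalIdempotents_vecMulVec hON
  have hnegΨ : -Ψ = ∑ i, (-lam i) • P i := by simp [hspec, ← sum_neg_distrib]
  refine (hasDerivAt_exp_add_smul (-Ψ) R).congr_deriv (HasSum.tsum_eq ?_)
  simp only [hnegΨ, hPidem.sum_range_pow_mul_mul_pow, smul_sum, smul_smul]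
  refine hasSum_sum fun p _ => hasSum_sum fun q _ => HasSum.smul_const ?_ _
  simpa only [hh, Real.dslope_exp_neg_neg, neg_neg] using Real.hasSum_dslope_exp (-lam p) (-lam q)

/-- Fréchet derivative of the matrix exponential at a symmetric matrix:
`d/dε exp(-Ψ + εR)|_{ε=0} = Σ_{i,j} e^{-λ_i/2} e^{-λ_j/2} h(λ_i-λ_j) P_i R P_j`,
with `h x = sinh(x/2)/(x/2)`, `h 0 = 1`, and `(λ i, P i)` the spectral data of
the symmetric matrix `Ψ`. -/
theorem hasDerivAt_exp_neg_psi {n : ℕ} (Ψ R : Matrix (Fin n) (Fin n) ℝ)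
    (hΨ : Ψ.IsSymm) (hR : R.IsSymm)
    (e : Fin n → (Fin n → ℝ)) (lam : Fin n → ℝ)
    (hON : ∀ i j, e i ⬝ᵥ e j = if i = j then 1 else 0)
    (P : Fin n → Matrix (Fin n) (Fin n) ℝ)
    (hP : ∀ i, P i = vecMulVec (e i) (e i))
    (hspec : Ψ = ∑ i, lam i • P i)
    (h : ℝ → ℝ)
    (hh : ∀ x : ℝ, h x = if x = 0 then 1 else Real.sinh (x / 2) / (x / 2)) :
    HasDerivAt (fun ε : ℝ => NormedSpace.exp (-Ψ + ε • R))
      (∑ i, ∑ j,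
        (Real.exp (-lam i / 2) * Real.exp (-lam j / 2) * h (lam i - lam j)) •
          (P i * R * P j)) 0 :=
  hasDerivAt_exp_neg_psi_general Ψ R e lam hON P hP hspec h hh
end

section
/- For a real symmetric matrix Ψ with eigenvalues λ_i and spectral projectors P_i, and symmetric matrices R and E with tr(E) = 0, the matrix L_{α2}(Ψ,R,E) := Σ_{i,j,k} ((f(λ_i-λ_k) - f(λ_j-λ_k))/(λ_i-λ_j)) · [P_i R P_j E P_k + P_k E P_j R P_i] is symmetric and traceless, where the quotient is interpreted as f'(λ_i-λ_k) when λ_i = λ_j and f(x)=x/tanh(x/2), f(0)=2. -/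
open Matrix

/-!
Write `M_{ijk} = P_i R P_j E P_k`. Since `P_i`, `R`, `E` are symmetric, `P_k E P_j R P_i = M_{ijk}ᵀ`,
so every summand of `L` has the form `c_{ijk} (M + Mᵀ)` and `L` is symmetric. As the `P_i` are
orthogonal projections, `tr M_{ijk} = δ_{ik} t_{ij}` with `t_{ij} = tr (P_i R P_j E)` symmetric in
`i, j`, so `tr L = 2 Σ_{i,j} c_{iji} t_{ij}`. Finally `c_{iji} = dslope f 0 (λ_j - λ_i)` is odd in
`λ_j - λ_i` because `f` is even, and the sum of an antisymmetric against a symmetric array vanishes.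
-/

theorem Finset.sum_sum_eq_zero_of_antisymm {ι G : Type*} [AddCommGroup G] [IsAddTorsionFree G]
    (s : Finset ι) {g : ι → ι → G} (hg : ∀ i j, g j i = -g i j) :
    ∑ i ∈ s, ∑ j ∈ s, g i j = 0 := by
  refine self_eq_neg.mp ?_
  calc ∑ i ∈ s, ∑ j ∈ s, g i j = ∑ i ∈ s, ∑ j ∈ s, g j i := Finset.sum_comm
    _ = ∑ i ∈ s, ∑ j ∈ s, -g i j :=
      Finset.sum_congr rfl fun i _ => Finset.sum_congr rfl fun j _ => hg i j
    _ = -∑ i ∈ s, ∑ j ∈ s, g i j := by simp only [Finset.sum_neg_distrib]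

section Dslope

variable {𝕜 E : Type*} [NontriviallyNormedField 𝕜] [NormedAddCommGroup E] [NormedSpace 𝕜 E]
  {f : 𝕜 → E}

theorem Function.Even.deriv (hf : f.Even) : (deriv f).Odd := fun x => by
  have h := deriv_comp_neg f (-x)
  rwa [show (fun y => f (-y)) = f from funext hf, neg_neg] at h

theorem Function.Even.dslope_zero (hf : f.Even) : (dslope f 0).Odd := fun b => by
  rcases eq_or_ne b 0 with rfl | hb
  · simpa only [neg_zero, dslope_same] using hf.deriv 0
  · rw [dslope_of_ne f (neg_ne_zero.mpr hb), dslope_of_ne f hb, slope_def_module,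
      slope_def_module, hf b, sub_zero, sub_zero, inv_neg, neg_smul]

end Dslope

theorem even_ite_zero_div_tanh_half :
    Function.Even (fun x : ℝ => if x = 0 then 2 else x / Real.tanh (x / 2)) := fun x => by
  simp only [neg_eq_zero, neg_div, Real.tanh_neg, div_neg, neg_neg]

namespace Matrix

variable {ι m α : Type*}

theorem isSymm_sum [AddCommMonoid α] {s : Finset ι} {A : ι → Matrix m m α} (h : ∀ i ∈ s, (A i).IsSymm) :
    (∑ i ∈ s, A i).IsSymm := by
  rw [IsSymm, transpose_sum]
  exact Finset.sum_congr rfl h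

theorem isSymm_vecMulVec_self [CommMagma α] (v : m → α) : (vecMulVec v v).IsSymm :=
  transpose_vecMulVec v v

variable [CommSemiring α] [Fintype m]

theorem vecMulVec_self_mul_vecMulVec_self_of_orthonormal [DecidableEq ι] {e : ι → m → α}
    (he : ∀ i j, e i ⬝ᵥ e j = if i = j then 1 else 0) (i j : ι) :
    vecMulVec (e i) (e i) * vecMulVec (e j) (e j) =
      if i = j then vecMulVec (e i) (e i) else 0 := by
  rw [vecMulVec_mul_vecMulVec, he]
  split_ifs with h
  · rw [h, one_smul]
  · rw [zero_smul]
    ext a b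
    simp [vecMulVec_apply]

variable {X Y Z W : Matrix m m α}

theorem transpose_mul_mul_mul_mul_of_isSymm {V : Matrix m m α} (hV : V.IsSymm) (hW : W.IsSymm)
    (hX : X.IsSymm) (hY : Y.IsSymm) (hZ : Z.IsSymm) :
    (V * W * X * Y * Z)ᵀ = Z * Y * X * W * V := by
  simp only [transpose_mul, hV.eq, hW.eq, hX.eq, hY.eq, hZ.eq, Matrix.mul_assoc]

theorem trace_mul_mul_mul_swap_of_isSymm (hW : W.IsSymm) (hX : X.IsSymm) (hY : Y.IsSymm)
    (hZ : Z.IsSymm) : (W * X * Y * Z).trace = (Y * X * W * Z).trace := by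
  rw [← trace_transpose]
  simp only [transpose_mul, hW.eq, hX.eq, hY.eq, hZ.eq]
  rw [trace_mul_comm, Matrix.mul_assoc, Matrix.mul_assoc, Matrix.mul_assoc, Matrix.mul_assoc]

theorem trace_mul_mul_mul_mul_of_orthogonal [DecidableEq ι] {P : ι → Matrix m m α}
    (hP : ∀ i j, P i * P j = if i = j then P i else 0) (A B : Matrix m m α) (i j k : ι) :
    (P i * A * P j * B * P k).trace = if k = i then (P i * A * P j * B).trace else 0 := by
  rw [trace_mul_comm]
  simp only [← Matrix.mul_assoc, hP k i]
  split_ifs with h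
  · rw [h]
  · simp only [Matrix.zero_mul, trace_zero]

end Matrix

theorem L_alpha2_isSymm_traceless_general {n : ℕ} (R E : Matrix (Fin n) (Fin n) ℝ)
    (hR : R.IsSymm) (hE : E.IsSymm)
    (e : Fin n → (Fin n → ℝ)) (lam : Fin n → ℝ)
    (hON : ∀ i j, e i ⬝ᵥ e j = if i = j then 1 else 0)
    (P : Fin n → Matrix (Fin n) (Fin n) ℝ)
    (hP : ∀ i, P i = vecMulVec (e i) (e i))
    (f : ℝ → ℝ)
    (hf : ∀ x : ℝ, f x = if x = 0 then 2 else x / Real.tanh (x / 2))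
    (c : Fin n → Fin n → Fin n → ℝ)
    (hc : ∀ i j k, c i j k =
      if lam i = lam j then deriv f (lam i - lam k)
      else (f (lam i - lam k) - f (lam j - lam k)) / (lam i - lam j))
    (L : Matrix (Fin n) (Fin n) ℝ)
    (hL : L = ∑ i, ∑ j, ∑ k,
        c i j k • (P i * R * P j * E * P k + P k * E * P j * R * P i)) :
    L.IsSymm ∧ L.trace = 0 := by
  have hPsymm : ∀ i, (P i).IsSymm := fun i => hP i ▸ isSymm_vecMulVec_self (e i)
  have hPorth : ∀ i j, P i * P j = if i = j then P i else 0 := fun i j => by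
    simp only [hP, vecMulVec_self_mul_vecMulVec_self_of_orthonormal hON]
  set M := fun i j k => P i * R * P j * E * P k
  have hLM : L = ∑ i, ∑ j, ∑ k, c i j k • (M i j k + (M i j k)ᵀ) := by
    simp only [M, transpose_mul_mul_mul_mul_of_isSymm (hPsymm _) hR (hPsymm _) hE (hPsymm _), hL]
  set t := fun i j => (P i * R * P j * E).trace
  have ht : ∀ i j, t j i = t i j := fun i j =>
    trace_mul_mul_mul_swap_of_isSymm (hPsymm j) hR (hPsymm i) hE
  have hcoef : ∀ i j, c i j i = dslope f 0 (lam j - lam i) := fun i j => by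
    rw [hc, sub_self]
    split_ifs with h
    · rw [h, sub_self, dslope_same]
    · rw [dslope_of_ne f (sub_ne_zero.mpr (Ne.symm h)), slope_def_field, sub_zero,
        ← neg_div_neg_eq, neg_sub, neg_sub]
  have hfeven : f.Even := funext hf ▸ even_ite_zero_div_tanh_half
  have hcodd : ∀ i j, c j i j = -c i j i := fun i j => by
    rw [hcoef, hcoef, ← neg_sub, hfeven.dslope_zero]
  refine ⟨hLM ▸ isSymm_sum fun i _ => isSymm_sum fun j _ => isSymm_sum fun k _ =>
    (isSymm_add_transpose_self _).smul _, ?_⟩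
  calc L.trace = ∑ i, ∑ j, c i j i * (2 * t i j) := by
        simp only [hLM, trace_sum, trace_smul, trace_add, trace_transpose, smul_eq_mul, M,
          ← two_mul, trace_mul_mul_mul_mul_of_orthogonal hPorth, mul_ite, mul_zero,
          Finset.sum_ite_eq', Finset.mem_univ, if_true, t]
    _ = 0 := Finset.sum_sum_eq_zero_of_antisymm _ fun i j => by rw [hcodd, ht]; ring

/-- The VMS linearization term
`L_{α2}(Ψ,R,E) = Σ_{i,j,k} ((f(λ_i-λ_k) - f(λ_j-λ_k))/(λ_i-λ_j)) ·
  (P_i R P_j E P_k + P_k E P_j R P_i)`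
is symmetric and traceless, where the divided-difference coefficient is
interpreted as `f'(λ_i-λ_k)` when `λ_i = λ_j`, and
`f x = x / tanh (x/2)` with `f 0 = 2`. -/
theorem L_alpha2_isSymm_traceless {n : ℕ} (Ψ R E : Matrix (Fin n) (Fin n) ℝ)
    (hΨ : Ψ.IsSymm) (hR : R.IsSymm) (hE : E.IsSymm) (hEtr : E.trace = 0)
    (e : Fin n → (Fin n → ℝ)) (lam : Fin n → ℝ)
    (hON : ∀ i j, e i ⬝ᵥ e j = if i = j then 1 else 0)
    (P : Fin n → Matrix (Fin n) (Fin n) ℝ)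
    (hP : ∀ i, P i = vecMulVec (e i) (e i))
    (hspec : Ψ = ∑ i, lam i • P i)
    (f : ℝ → ℝ)
    (hf : ∀ x : ℝ, f x = if x = 0 then 2 else x / Real.tanh (x / 2))
    (c : Fin n → Fin n → Fin n → ℝ)
    (hc : ∀ i j k, c i j k =
      if lam i = lam j then deriv f (lam i - lam k)
      else (f (lam i - lam k) - f (lam j - lam k)) / (lam i - lam j))
    (L : Matrix (Fin n) (Fin n) ℝ)
    (hL : L = ∑ i, ∑ j, ∑ k,
        c i j k • (P i * R * P j * E * P k + P k * E * P j * R * P i)) :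
    L.IsSymm ∧ L.trace = 0 :=
  L_alpha2_isSymm_traceless_general R E hR hE e lam hON P hP f hf c hc L hL
end
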